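/- Let G be a directed graph, P = p_1...p_ℓ a simple directed path in G, and x = p_k a vertex of P. Suppose a u→v path Q in G−x exists whose earliest P-vertex mn(Q) satisfies mn(Q) ≺ x and whose latest P-vertex mx(Q) satisfies x ≺ mx(Q), and Q can be written as Q_1 R Q_2 where R is a mn(Q)→mx(Q) subpath. Then there exists a u→v path Q' in G−x of the form Q_1 P_1 P_2 P_3 Q_2 where P_1 and P_3 are (possibly empty) subpaths of P and P_2 is a minimal detour of x. -/

import Mathlib

/-- A (directed) walk in digraph `G` from `a` to `b`, given as its list of vertices. -/
def DiWalk {V : Type*} (G : V → V → Prop) (a b : V) (l : List V) : Prop :=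
  List.Chain' G l ∧ l.head? = some a ∧ l.getLast? = some b

/-- The graph `G` with the vertex `x` removed (induced subgraph `G − x`). -/
def Del {V : Type*} (G : V → V → Prop) (x : V) : V → V → Prop :=
  fun a b => G a b ∧ a ≠ x ∧ b ≠ x

/-- `l` is a detour of `x = p.get k`: a satellite walk from `p.get i` to `p.get j`
with `i < k < j`. -/
def IsDetour {V : Type*} (G : V → V → Prop) (p : List V) (k i j : Fin p.length)
    (l : List V) : Prop :=
  DiWalk G (p.get i) (p.get j) l ∧ (∀ w ∈ l.tail.dropLast, w ∉ p) ∧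
  (i : ℕ) < (k : ℕ) ∧ (k : ℕ) < (j : ℕ)

/-- `l` is a minimal detour of `x = p.get k`: a detour `p.get i → p.get j` such that
no detour `p.get i' → p.get j'` with `i ≤ i' ≤ j' ≤ j` is strictly shorter (in index span). -/
def IsMinDetour {V : Type*} (G : V → V → Prop) (p : List V) (k i j : Fin p.length)
    (l : List V) : Prop :=
  IsDetour G p k i j l ∧
  ∀ (i' j' : Fin p.length) (l' : List V), IsDetour G p k i' j' l' →
    (i : ℕ) ≤ (i' : ℕ) → (j' : ℕ) ≤ (j : ℕ) → (j : ℕ) - (i : ℕ) ≤ (j' : ℕ) - (i' : ℕ)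

/-! An interior vertex of a walk in `G − x` that lies on `P` is not `x`, so it lies before or
after `x`; cutting the walk there, one of the two pieces still jumps over `x`. Repeating this
inside `R` leaves a detour of `x` whose vertices lie on `R`, hence whose endpoints lie between
`mn(Q)` and `mx(Q)`. A detour of least span nested inside it is minimal, and the segments of `P`
joining `mn(Q)` to its start and its end to `mx(Q)` avoid `x`. -/

lemma List.exists_eq_append_cons_of_mem_tail_dropLast {α : Type*} {l : List α} {w : α}
    (hw : w ∈ l.tail.dropLast) : ∃ A B, l = A ++ w :: B ∧ A ≠ [] ∧ B ≠ [] := by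
  obtain _ | ⟨a, t⟩ := l
  · simp at hw
  have ht : t ≠ [] := fun h => by simp [h] at hw
  obtain ⟨A, B, hAB⟩ := List.append_of_mem (List.tail_cons ▸ hw)
  refine ⟨a :: A, B ++ [t.getLast ht], ?_, by simp, by simp⟩
  conv_lhs => rw [← List.dropLast_append_getLast ht, hAB]
  simp

lemma List.head?_eq_or_mem_tail_dropLast_or_getLast?_eq {α : Type*} {l : List α} {w : α}
    (hw : w ∈ l) :
    l.head? = some w ∨ w ∈ l.tail.dropLast ∨ l.getLast? = some w := by
  obtain _ | ⟨a, t⟩ := l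
  · simp at hw
  rcases List.mem_cons.mp hw with rfl | hw
  · exact Or.inl rfl
  have ht : t ≠ [] := List.ne_nil_of_mem hw
  rw [← List.dropLast_append_getLast ht, List.mem_append, List.mem_singleton] at hw
  rcases hw with hw | rfl
  · exact Or.inr (Or.inl hw)
  · exact Or.inr (Or.inr (by simp [List.getLast?_cons, List.getLast?_eq_some_getLast ht]))

section Walks

variable {V : Type*} {G : V → V → Prop} {a b c w x : V} {l l' : List V}

lemma DiWalk.head_mem (h : DiWalk G a b l) : a ∈ l := List.mem_of_mem_head? h.2.1

lemma DiWalk.getLast_mem (h : DiWalk G a b l) : b ∈ l := List.mem_of_mem_getLast? h.2.2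

lemma DiWalk.append (h : DiWalk G a b l) (h' : DiWalk G b c l') :
    DiWalk G a c (l ++ l'.tail) := by
  obtain ⟨hc, hh, hl⟩ := h
  obtain ⟨hc', hh', hl'⟩ := h'
  obtain _ | ⟨b', t'⟩ := l'
  · simp at hh'
  obtain rfl : b' = b := by simpa using hh'
  obtain _ | ⟨a', s⟩ := l
  · simp at hh
  refine ⟨hc.append hc'.tail fun y hy z hz => ?_, by simpa using hh, ?_⟩
  · obtain rfl : y = b' := by simp_all
    exact (List.isChain_cons.mp hc').1 z hz
  · cases t' with
    | nil => simp_all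
    | cons y ys =>
      rw [List.getLast?_cons_cons] at hl'
      rw [List.tail_cons, List.getLast?_append, hl']
      rfl

lemma DiWalk.split {A B : List V} (h : DiWalk G a b (A ++ w :: B)) :
    DiWalk G a w (A ++ [w]) ∧ DiWalk G w b (w :: B) := by
  obtain ⟨hc, hh, hl⟩ := h
  refine ⟨⟨hc.infix ⟨[], B, by simp⟩, ?_, by simp⟩,
    ⟨hc.infix ⟨A, [], by simp⟩, by simp, ?_⟩⟩
  · cases A <;> simp_all
  · simp_all [List.getLast?_append]

lemma DiWalk.del (h : DiWalk G a b l) (hx : ∀ w ∈ l, w ≠ x) : DiWalk (Del G x) a b l :=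
  ⟨h.1.imp_of_mem_imp fun _ _ hu hv huv => ⟨huv, hx _ hu, hx _ hv⟩, h.2⟩

lemma DiWalk.of_del (h : DiWalk (Del G x) a b l) : DiWalk G a b l :=
  ⟨h.1.imp fun _ _ huv => huv.1, h.2⟩

end Walks

lemma List.IsChain.exists_diWalk_infix {V : Type*} {G : V → V → Prop} {p : List V}
    (hp : p.IsChain G) {a b : ℕ} (hab : a ≤ b) (hb : b < p.length) :
    ∃ l, DiWalk G p[a] p[b] l ∧ l <:+: p ∧
      ∀ w ∈ l, ∃ (m : ℕ) (hm : m < p.length), a ≤ m ∧ m ≤ b ∧ p[m] = w := by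
  have hinf : (p.drop a).take (b - a + 1) <:+: p :=
    (List.take_prefix _ _).isInfix.trans (List.drop_suffix _ _).isInfix
  refine ⟨(p.drop a).take (b - a + 1), ⟨hp.infix hinf, ?_, ?_⟩, hinf, fun w hw => ?_⟩
  · rw [List.head?_take, if_neg (by omega), List.head?_drop,
      List.getElem?_eq_getElem (hab.trans_lt hb)]
  · rw [List.getLast?_take, if_neg (by omega), Nat.add_sub_cancel, List.getElem?_drop,
      Nat.add_sub_cancel' hab, List.getElem?_eq_getElem hb]
    rfl
  · obtain ⟨j, hj, rfl⟩ := List.mem_take_iff_getElem.mp hw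
    exact ⟨a + j, by omega, by omega, by omega, (List.getElem_drop ..).symm⟩

lemma exists_diWalk_del_infix {V : Type*} {G : V → V → Prop} {p : List V}
    (hchain : p.IsChain G) (hp : p.Nodup) {k a b : Fin p.length} (hab : (a : ℕ) ≤ b)
    (hk : (k : ℕ) < a ∨ (b : ℕ) < k) :
    ∃ l, DiWalk (Del G (p.get k)) (p.get a) (p.get b) l ∧ l <:+: p := by
  obtain ⟨l, hl, hinf, hmem⟩ := hchain.exists_diWalk_infix hab b.isLt
  refine ⟨l, hl.del fun w hw hwk => ?_, hinf⟩
  obtain ⟨m, hm, ham, hmb, rfl⟩ := hmem w hw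
  have : m = k := congrArg Fin.val (hp.get_inj_iff.mp hwk : (⟨m, hm⟩ : Fin p.length) = k)
  omega

section Detours

variable {V : Type*} {G : V → V → Prop} {p : List V} {k : Fin p.length}

lemma exists_isDetour_infix_of_diWalk {i j : Fin p.length} {l : List V}
    (hl : DiWalk (Del G (p.get k)) (p.get i) (p.get j) l) (hik : (i : ℕ) < k)
    (hkj : (k : ℕ) < j) :
    ∃ (i' j' : Fin p.length) (s : List V), IsDetour G p k i' j' s ∧ s <:+: l := by
  induction hn : l.length using Nat.strong_induction_on generalizing l i j with
  | _ n ih =>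
  by_cases hsat : ∀ w ∈ l.tail.dropLast, w ∉ p
  · exact ⟨i, j, l, ⟨hl.of_del, hsat, hik, hkj⟩, List.infix_refl l⟩
  push Not at hsat
  obtain ⟨w, hw, hwp⟩ := hsat
  obtain ⟨m, rfl⟩ := List.get_of_mem hwp
  obtain ⟨A, B, rfl, hA, hB⟩ := List.exists_eq_append_cons_of_mem_tail_dropLast hw
  obtain ⟨hlA, hlB⟩ := hl.split
  have hmk : m ≠ k := by
    rintro rfl
    -- `p.get m` has an out-neighbour in `G − p.get k`
    obtain ⟨c, B, rfl⟩ := List.exists_cons_of_ne_nil hB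
    exact (List.isChain_cons_cons.mp hlB.1).1.2.1 rfl
  rcases Nat.lt_or_gt_of_ne (Fin.val_ne_of_ne hmk) with hm | hm
  · have hlen : (p.get m :: B).length < n := by simp [← hn, List.length_pos_iff.mpr hA]
    obtain ⟨i', j', s, hs, hsB⟩ := ih _ hlen hlB hm hkj rfl
    exact ⟨i', j', s, hs, hsB.trans (List.suffix_append _ _).isInfix⟩
  · have hlen : (A ++ [p.get m]).length < n := by simp [← hn, List.length_pos_iff.mpr hB]
    obtain ⟨i', j', s, hs, hsA⟩ := ih _ hlen hlA hik hm rfl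
    exact ⟨i', j', s, hs, hsA.trans ⟨[], B, by simp⟩⟩

lemma IsDetour.exists_isMinDetour {i j : Fin p.length} {l : List V}
    (h : IsDetour G p k i j l) :
    ∃ (a b : Fin p.length) (l' : List V),
      IsMinDetour G p k a b l' ∧ (i : ℕ) ≤ a ∧ (b : ℕ) ≤ j := by
  induction hn : (j : ℕ) - i using Nat.strong_induction_on generalizing i j l with
  | _ n ih =>
  by_cases hmin : ∀ (i' j' : Fin p.length) (l' : List V), IsDetour G p k i' j' l' →
      (i : ℕ) ≤ i' → (j' : ℕ) ≤ j → (j : ℕ) - i ≤ (j' : ℕ) - i'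
  · exact ⟨i, j, l, ⟨h, hmin⟩, le_rfl, le_rfl⟩
  push Not at hmin
  obtain ⟨i', j', l', h', hii', hj'j, hlt⟩ := hmin
  obtain ⟨a, b, l'', hab, hi'a, hbj'⟩ := ih _ (hn ▸ hlt) h' rfl
  exact ⟨a, b, l'', hab, hii'.trans hi'a, hbj'.trans hj'j⟩

lemma IsDetour.diWalk_del (hp : p.Nodup) {i j : Fin p.length} {l : List V}
    (h : IsDetour G p k i j l) : DiWalk (Del G (p.get k)) (p.get i) (p.get j) l := by
  obtain ⟨hl, hsat, hik, hkj⟩ := h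
  refine hl.del fun w hw hwk => ?_
  rcases List.head?_eq_or_mem_tail_dropLast_or_getLast?_eq hw with hw | hw | hw
  · have : i = k := hp.get_inj_iff.mp ((Option.some.inj (hl.2.1.symm.trans hw)).trans hwk)
    omega
  · exact hsat w hw (hwk ▸ List.get_mem p k)
  · have : j = k := hp.get_inj_iff.mp ((Option.some.inj (hl.2.2.symm.trans hw)).trans hwk)
    omega

end Detours

/-- if a `u → v` walk `Q = Q₁ R Q₂` in `G − x` (with `x = p.get k`) has
its earliest `P`-vertex `p.get mn` before `x` and its latest `P`-vertex `p.get mx`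
after `x`, where `R` is a `p.get mn → p.get mx` subwalk, then there is a `u → v` walk
`Q' = Q₁ P₁ P₂ P₃ Q₂` in `G − x` with `P₁, P₃` (possibly empty) subpaths of `P` and
`P₂` a minimal detour of `x`. -/
theorem stmt_9 {V : Type*} (G : V → V → Prop) (p : List V)
    (hchain : List.Chain' G p) (hnodup : p.Nodup)
    (k : Fin p.length) (u v : V)
    (q1 r q2 : List V) (mn mx : Fin p.length)
    (h1 : DiWalk (Del G (p.get k)) u (p.get mn) q1)
    (hr : DiWalk (Del G (p.get k)) (p.get mn) (p.get mx) r)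
    (h2 : DiWalk (Del G (p.get k)) (p.get mx) v q2)
    (hmn : (mn : ℕ) < (k : ℕ)) (hmx : (k : ℕ) < (mx : ℕ))
    (hbounds : ∀ w ∈ q1 ++ r ++ q2, ∀ m : Fin p.length, w = p.get m →
      (mn : ℕ) ≤ (m : ℕ) ∧ (m : ℕ) ≤ (mx : ℕ)) :
    ∃ (a b : Fin p.length) (l1 l2 l3 : List V),
      DiWalk (Del G (p.get k)) (p.get mn) (p.get a) l1 ∧ l1 <:+: p ∧
      IsMinDetour G p k a b l2 ∧
      DiWalk (Del G (p.get k)) (p.get b) (p.get mx) l3 ∧ l3 <:+: p ∧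
      DiWalk (Del G (p.get k)) u v
        (q1 ++ l1.tail ++ l2.tail ++ l3.tail ++ q2.tail) := by
  obtain ⟨i, j, s, hs, hsr⟩ := exists_isDetour_infix_of_diWalk hr hmn hmx
  have hs_bounds (m : Fin p.length) (hm : p.get m ∈ s) : (mn : ℕ) ≤ m ∧ (m : ℕ) ≤ mx :=
    hbounds _ (List.mem_append_left _ (List.mem_append_right _ (hsr.subset hm))) m rfl
  obtain ⟨a, b, l2, hmin, hia, hbj⟩ := hs.exists_isMinDetour
  have hmna : (mn : ℕ) ≤ a := (hs_bounds i hs.1.head_mem).1.trans hia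
  have hbmx : (b : ℕ) ≤ mx := hbj.trans (hs_bounds j hs.1.getLast_mem).2
  obtain ⟨l1, hl1, hl1p⟩ := exists_diWalk_del_infix hchain hnodup hmna (Or.inr hmin.1.2.2.1)
  obtain ⟨l3, hl3, hl3p⟩ := exists_diWalk_del_infix hchain hnodup hbmx (Or.inl hmin.1.2.2.2)
  exact ⟨a, b, l1, l2, l3, hl1, hl1p, hmin, hl3, hl3p,
    (((h1.append hl1).append (hmin.1.diWalk_del hnodup)).append hl3).append h2⟩
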